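/- Let V be a finite-dimensional vector space over a field K of characteristic 0 with basis S, let ≺ be a reflexive and transitive relation on S with coherent components Λ and subspaces V_λ, and let G⁰ ≤ GL(V) be the subgroup generated by all GL(V_λ), λ ∈ Λ, together with all elements I + tE_{αβ} with t ∈ K, α ≺ β and β ⊀ α. Then for every permutation σ of S preserving ≺: P_σ ∈ G⁰ if and only if σ(λ) = λ for every coherent component λ ∈ Λ (i.e., the induced permutation σ̄ of Λ is trivial). -/

import Mathlib

section

variable {S : Type*}

/-- The coherent components of a reflexive transitive relation `≺` on `S`: the
equivalence classes of `α ∼ β ↔ α ≺ β ∧ β ≺ α`. -/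
def IsCoherentClass (prec : S → S → Prop) (l : Set S) : Prop :=
  ∃ α : S, l = {β | prec α β ∧ prec β α}

variable {K V : Type*} [Field K] [AddCommGroup V] [Module K V]

/-- `V_λ`: the span of the basis vectors belonging to `λ`. -/
def spanClass (b : Module.Basis S K V) (l : Set S) : Submodule K V :=
  Submodule.span K (⇑b '' l)

/-- The embedded copies of `GL(V_λ)` for the coherent components `λ`: automorphisms
mapping `V_λ` into itself and fixing every basis vector outside `λ` (hence equal to
the identity on each `V_μ`, `μ ≠ λ`). -/
def genGLClass (b : Module.Basis S K V) (prec : S → S → Prop) : Set (V ≃ₗ[K] V) :=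
  {g | ∃ l : Set S, IsCoherentClass prec l ∧ (∀ s ∉ l, g (b s) = b s) ∧
    ∀ s ∈ l, g (b s) ∈ spanClass b l}

/-- The elements `I + t E_{αβ}` with `t ∈ K`, `α ≺ β` and `β ⊀ α`: they fix every
basis vector other than `β` and send `β` to `β + t • α`. -/
def genUnipotent (b : Module.Basis S K V) (prec : S → S → Prop) : Set (V ≃ₗ[K] V) :=
  {g | ∃ (t : K) (α β : S), prec α β ∧ ¬ prec β α ∧
    (∀ s : S, s ≠ β → g (b s) = b s) ∧ g (b β) = b β + t • b α}

/-- `G⁰ ≤ GL(V)`: the subgroup generated by all `GL(V_λ)`, `λ ∈ Λ`, together with all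
elements `I + t E_{αβ}` with `t ∈ K`, `α ≺ β` and `β ⊀ α`. -/
def connGroup (b : Module.Basis S K V) (prec : S → S → Prop) : Subgroup (V ≃ₗ[K] V) :=
  Subgroup.closure (genGLClass b prec ∪ genUnipotent b prec)

/-! Every generator of `G⁰` maps each basis vector `β` into the span of the basis vectors
`α ≺ β`; by finite-dimensionality `G⁰` therefore stabilises each of these subspaces, so
`P_σ, P_σ⁻¹ ∈ G⁰` forces `σ β ≺ β ≺ σ β`. Conversely, a permutation fixing every coherent
component is a product of transpositions inside components, and the permutation matrix of such
a transposition lies in the corresponding `GL(V_λ)`. -/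

open Equiv Pointwise

theorem Equiv.Perm.mem_closure_swap_of_forall_rel {α : Type*} [Finite α] [DecidableEq α]
    {r : α → α → Prop} (hrefl : Reflexive r) (htrans : Transitive r) {σ : Perm α}
    (hσ : ∀ x, r x (σ x)) : σ ∈ Subgroup.closure {τ | ∃ x y, r x y ∧ swap x y = τ} := by
  cases nonempty_fintype α
  induction hn : σ.support.card using Nat.strong_induction_on generalizing σ with
  | _ n ih =>
  by_cases hone : σ = 1
  · exact hone ▸ one_mem _
  obtain ⟨x, hx⟩ : ∃ x, σ x ≠ x := not_forall.1 fun h => hone (Perm.ext h)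
  have hrest : ∀ y, r y ((swap x (σ x) * σ) y) := by
    intro y
    rw [Perm.mul_apply]
    rcases eq_or_ne (σ y) x with hy | hy
    · rw [hy, swap_apply_left]
      exact htrans (hy ▸ hσ y) (hσ x)
    rcases eq_or_ne y x with rfl | hyx
    · rw [swap_apply_right]
      exact hrefl y
    · rw [swap_apply_of_ne_of_ne hy (σ.injective.ne hyx)]
      exact hσ y
  have hdecomp : σ = swap x (σ x) * (swap x (σ x) * σ) := by
    rw [← mul_assoc, swap_mul_self, one_mul]
  rw [hdecomp]
  exact mul_mem (Subgroup.subset_closure ⟨x, σ x, hσ x, rfl⟩)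
    (ih _ (hn ▸ Perm.card_support_swap_mul hx) hrest rfl)

noncomputable def Module.Basis.permHom {ι R M : Type*} [Semiring R] [AddCommMonoid M] [Module R M]
    (b : Module.Basis ι R M) : Perm ι →* (M ≃ₗ[R] M) where
  toFun σ := b.equiv b σ
  map_one' := b.equiv_refl
  map_mul' σ τ := (b.equiv_trans b b τ σ).symm

@[simp]
theorem Module.Basis.permHom_apply {ι R M : Type*} [Semiring R] [AddCommMonoid M] [Module R M]
    (b : Module.Basis ι R M) (σ : Perm ι) : b.permHom σ = b.equiv b σ :=
  rfl

variable {prec : S → S → Prop}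

theorem forall_isCoherentClass_image_eq_iff (hrefl : Reflexive prec) (htrans : Transitive prec)
    {σ : Perm S} :
    (∀ l, IsCoherentClass prec l → ⇑σ '' l = l) ↔ ∀ β, prec β (σ β) ∧ prec (σ β) β := by
  constructor
  · intro h β
    have hβ : σ β ∈ ⇑σ '' {γ | prec β γ ∧ prec γ β} := ⟨β, ⟨hrefl β, hrefl β⟩, rfl⟩
    rwa [h _ ⟨β, rfl⟩] at hβ
  · rintro h l ⟨α, rfl⟩
    rw [σ.image_eq_preimage_symm]
    ext β
    obtain ⟨h₁, h₂⟩ : prec (σ.symm β) β ∧ prec β (σ.symm β) := by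
      simpa using h (σ.symm β)
    exact ⟨fun hβ => ⟨htrans hβ.1 h₁, htrans h₂ hβ.2⟩,
      fun hβ => ⟨htrans hβ.1 h₂, htrans h₁ hβ.2⟩⟩

def lowerSpan (b : Module.Basis S K V) (prec : S → S → Prop) (β : S) : Submodule K V :=
  Submodule.span K (⇑b '' {α | prec α β})

def lowerSpanStabilizer (b : Module.Basis S K V) (prec : S → S → Prop) : Subgroup (V ≃ₗ[K] V) :=
  ⨅ β, MulAction.stabilizer (V ≃ₗ[K] V) (lowerSpan b prec β)

variable {b : Module.Basis S K V}

theorem basis_mem_lowerSpan (hrefl : Reflexive prec) (β : S) : b β ∈ lowerSpan b prec β :=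
  Submodule.subset_span ⟨β, hrefl β, rfl⟩

theorem map_lowerSpan_le (htrans : Transitive prec) {f : V →ₗ[K] V}
    (hf : ∀ γ, f (b γ) ∈ lowerSpan b prec γ) (β : S) :
    (lowerSpan b prec β).map f ≤ lowerSpan b prec β := by
  rw [lowerSpan, Submodule.map_span_le]
  rintro _ ⟨γ, hγ, rfl⟩
  exact Submodule.span_mono (Set.image_mono fun δ hδ => htrans hδ hγ) (hf γ)

theorem mem_lowerSpanStabilizer_of_forall [FiniteDimensional K V] (htrans : Transitive prec)
    {g : V ≃ₗ[K] V} (hg : ∀ γ, g (b γ) ∈ lowerSpan b prec γ) : g ∈ lowerSpanStabilizer b prec :=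
  Subgroup.mem_iInf.2 fun β =>
    Submodule.eq_of_le_of_finrank_eq (map_lowerSpan_le htrans (f := g.toLinearMap) hg β)
      (LinearEquiv.finrank_map_eq g _)

theorem apply_mem_lowerSpan_of_mem_lowerSpanStabilizer (hrefl : Reflexive prec) {g : V ≃ₗ[K] V}
    (hg : g ∈ lowerSpanStabilizer b prec) (β : S) : g (b β) ∈ lowerSpan b prec β := by
  rw [← (Subgroup.mem_iInf.1 hg β : g • lowerSpan b prec β = _)]
  exact Submodule.smul_mem_pointwise_smul _ g _ (basis_mem_lowerSpan hrefl β)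

theorem prec_apply_of_permHom_mem_lowerSpanStabilizer (hrefl : Reflexive prec) {σ : Perm S}
    (hσ : b.permHom σ ∈ lowerSpanStabilizer b prec) (β : S) : prec (σ β) β := by
  have hβ := apply_mem_lowerSpan_of_mem_lowerSpanStabilizer hrefl hσ β
  rwa [b.permHom_apply, b.equiv_apply, lowerSpan, b.self_mem_span_image] at hβ

theorem apply_mem_lowerSpan_of_mem_genGLClass (hrefl : Reflexive prec) (htrans : Transitive prec)
    {g : V ≃ₗ[K] V} (hg : g ∈ genGLClass b prec) (γ : S) : g (b γ) ∈ lowerSpan b prec γ := by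
  obtain ⟨l, ⟨α, rfl⟩, hout, hin⟩ := hg
  by_cases hγ : γ ∈ {β | prec α β ∧ prec β α}
  · exact Submodule.span_mono (Set.image_mono fun δ hδ => htrans hδ.2 hγ.1) (hin γ hγ)
  · rw [hout γ hγ]
    exact basis_mem_lowerSpan hrefl γ

theorem apply_mem_lowerSpan_of_mem_genUnipotent (hrefl : Reflexive prec) {g : V ≃ₗ[K] V}
    (hg : g ∈ genUnipotent b prec) (γ : S) : g (b γ) ∈ lowerSpan b prec γ := by
  obtain ⟨t, α, β, hαβ, -, hout, hβ⟩ := hg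
  rcases eq_or_ne γ β with rfl | hγ
  · rw [hβ]
    exact add_mem (basis_mem_lowerSpan hrefl γ)
      (Submodule.smul_mem _ t (Submodule.subset_span ⟨α, hαβ, rfl⟩))
  · rw [hout γ hγ]
    exact basis_mem_lowerSpan hrefl γ

theorem connGroup_le_lowerSpanStabilizer [FiniteDimensional K V] (hrefl : Reflexive prec)
    (htrans : Transitive prec) : connGroup b prec ≤ lowerSpanStabilizer b prec :=
  (Subgroup.closure_le _).2 fun _ hg => mem_lowerSpanStabilizer_of_forall htrans <|
    hg.elim (apply_mem_lowerSpan_of_mem_genGLClass hrefl htrans)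
      (apply_mem_lowerSpan_of_mem_genUnipotent hrefl)

theorem permHom_swap_mem_genGLClass [DecidableEq S] (hrefl : Reflexive prec) {x y : S}
    (hxy : prec x y ∧ prec y x) :
    b.permHom (swap x y) ∈ genGLClass b prec := by
  refine ⟨{β | prec x β ∧ prec β x}, ⟨x, rfl⟩, fun s hs => ?_, fun s hs => ?_⟩
  · have hsx : s ≠ x := by rintro rfl; exact hs ⟨hrefl s, hrefl s⟩
    have hsy : s ≠ y := by rintro rfl; exact hs hxy
    simp [swap_apply_of_ne_of_ne hsx hsy]
  · refine Submodule.subset_span ⟨swap x y s, ?_, by simp⟩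
    rw [swap_apply_def]
    split_ifs
    · exact hxy
    · exact ⟨hrefl x, hrefl x⟩
    · exact hs

theorem permMap_mem_connGroup_iff_general [DecidableEq S]
    [FiniteDimensional K V] (b : Module.Basis S K V) (prec : S → S → Prop)
    (hrefl : Reflexive prec) (htrans : Transitive prec)
    (σ : Equiv.Perm S) :
    b.equiv b σ ∈ connGroup b prec ↔
      ∀ l : Set S, IsCoherentClass prec l → ⇑σ '' l = l := by
  have : Finite S := Module.Finite.finite_basis b
  rw [forall_isCoherentClass_image_eq_iff hrefl htrans, ← b.permHom_apply]
  have hle := connGroup_le_lowerSpanStabilizer (b := b) hrefl htrans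
  constructor
  · intro hσ β
    have hσinv : b.permHom σ⁻¹ ∈ lowerSpanStabilizer b prec :=
      map_inv b.permHom σ ▸ hle (inv_mem hσ)
    refine ⟨?_, prec_apply_of_permHom_mem_lowerSpanStabilizer hrefl (hle hσ) β⟩
    simpa using prec_apply_of_permHom_mem_lowerSpanStabilizer hrefl hσinv (σ β)
  · intro hσ
    refine (Subgroup.closure_le ((connGroup b prec).comap b.permHom)).2 ?_
      (Perm.mem_closure_swap_of_forall_rel (r := fun x y => prec x y ∧ prec y x)
        (fun x => ⟨hrefl x, hrefl x⟩)
        (fun _ _ _ h₁ h₂ => ⟨htrans h₁.1 h₂.1, htrans h₂.2 h₁.2⟩) hσ)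
    rintro _ ⟨x, y, hxy, rfl⟩
    exact Subgroup.subset_closure (Or.inl (permHom_swap_mem_genGLClass hrefl hxy))

/-- Let `V` be a finite-dimensional vector space over a field `K` of
characteristic `0` with basis `S`, `≺` a reflexive transitive relation on `S` with
coherent components `Λ` and subspaces `V_λ`, and `G⁰ ≤ GL(V)` the subgroup generated
by all `GL(V_λ)` and all `I + t E_{αβ}` (`t ∈ K`, `α ≺ β`, `β ⊀ α`).  Then for every
permutation `σ` of `S` preserving `≺`: `P_σ ∈ G⁰` iff `σ(λ) = λ` for every coherent
component `λ ∈ Λ`, i.e. iff the induced permutation `σ̄` of `Λ` is trivial. -/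
theorem permMap_mem_connGroup_iff [Fintype S] [DecidableEq S] [CharZero K]
    [FiniteDimensional K V] (b : Module.Basis S K V) (prec : S → S → Prop)
    (hrefl : Reflexive prec) (htrans : Transitive prec)
    (σ : Equiv.Perm S) (hσ : ∀ α β, prec α β → prec (σ α) (σ β)) :
    b.equiv b σ ∈ connGroup b prec ↔
      ∀ l : Set S, IsCoherentClass prec l → ⇑σ '' l = l :=
  permMap_mem_connGroup_iff_general b prec hrefl htrans σ
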